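/- arXiv:2507.23766 — 3 statements merged into one kernel-verified Lean document; each statement's English description precedes it below -/
import Mathlib

section
/- Let G be a graph (1-dimensional CW complex) and let α be a cellular 1-cycle on G with integer coefficients. Then there exist finitely many embedded closed curves γ₁, …, γ_k in G (i.e. simple cycles in the graph) such that α = Σᵢ ch(γᵢ) and ‖α‖₁ = Σᵢ ‖ch(γᵢ)‖₁, where ‖·‖₁ is the sum of absolute values of coefficients. -/
/-!
STATEMENT 4: Let `G` be a graph (1-dimensional CW complex) and `α` a cellular
1-cycle on `G` with integer coefficients.  Then there are finitely many embedded
closed curves (simple cycles) `γ₁, …, γ_k` in `G` with `α = Σᵢ ch(γᵢ)` and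
`‖α‖₁ = Σᵢ ‖ch(γᵢ)‖₁`.

Combinatorial model: a graph is given by vertices, edges and endpoint maps; a
cellular 1-chain is a finitely supported `ℤ`-linear combination of edges, with
boundary `∂(Σ c_e e) = Σ c_e (tgt e − src e)`; a closed edge path is a list of
directed edge traversals with matching endpoints; it is embedded (a simple
cycle) when it is nonempty and visits pairwise distinct vertices; `ch(γ)`
records the signed traversal count of each edge; `‖·‖₁` is the sum of the
absolute values of the coefficients. -/

/-- A graph (1-dimensional CW complex). -/
structure CWGraph where
  V : Type
  E : Type
  src : E → V
  tgt : E → V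

namespace CWGraph

variable (G : CWGraph)

abbrev Step := G.E × Bool

def stepSrc (s : G.Step) : G.V := if s.2 then G.src s.1 else G.tgt s.1

def stepTgt (s : G.Step) : G.V := if s.2 then G.tgt s.1 else G.src s.1

/-- `p` is an edge path from `a` to `b`. -/
def IsArc : List G.Step → G.V → G.V → Prop
  | [], a, b => a = b
  | s :: rest, a, b => G.stepSrc s = a ∧ IsArc rest (G.stepTgt s) b

/-- An embedded closed curve (simple cycle): a nonempty closed edge path
visiting pairwise distinct vertices. -/
def IsSimpleClosedCurve (p : List G.Step) : Prop :=
  p ≠ [] ∧ (∃ a : G.V, G.IsArc p a a) ∧ (p.map G.stepSrc).Nodup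

/-- The cellular 1-chain `ch(γ)` associated to an edge path. -/
noncomputable def ch (p : List G.Step) : G.E →₀ ℤ :=
  (p.map fun s => Finsupp.single s.1 (if s.2 then (1 : ℤ) else -1)).sum

/-- The boundary of a cellular 1-chain (alternating sum of endpoints). -/
noncomputable def bdry (α : G.E →₀ ℤ) : G.V →₀ ℤ :=
  α.sum fun e c => Finsupp.single (G.tgt e) c - Finsupp.single (G.src e) c

/-- The `L¹`-norm of a cellular 1-chain: the sum of the absolute values of its
coefficients. -/
def l1 (α : G.E →₀ ℤ) : ℤ := α.sum fun _ c => |c|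

end CWGraph

namespace CWGraph

variable {G : CWGraph}

/-- A step compatible with the sign of `α` on its edge. -/
def Ok (α : G.E →₀ ℤ) (s : G.Step) : Prop := if s.2 then 0 < α s.1 else α s.1 < 0

lemma isArc_nil {a b : G.V} : G.IsArc [] a b ↔ a = b := Iff.rfl

lemma isArc_cons {s : G.Step} {p : List G.Step} {a b : G.V} :
    G.IsArc (s :: p) a b ↔ G.stepSrc s = a ∧ G.IsArc p (G.stepTgt s) b := Iff.rfl

lemma isArc_append {p q : List G.Step} {a b c : G.V}
    (hp : G.IsArc p a b) (hq : G.IsArc q b c) : G.IsArc (p ++ q) a c := by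
  induction p generalizing a with
  | nil =>
    rw [isArc_nil] at hp
    subst hp
    exact hq
  | cons s rest ih =>
    rw [isArc_cons] at hp
    exact ⟨hp.1, ih hp.2⟩

lemma isArc_append_right {p q : List G.Step} {a c : G.V}
    (h : G.IsArc (p ++ q) a c) : ∃ b, G.IsArc q b c := by
  induction p generalizing a with
  | nil => exact ⟨a, h⟩
  | cons s rest ih =>
    rw [List.cons_append, isArc_cons] at h
    exact ih h.2

lemma ch_nil : G.ch [] = 0 := rfl

lemma ch_cons (s : G.Step) (p : List G.Step) :
    G.ch (s :: p) = Finsupp.single s.1 (if s.2 then (1 : ℤ) else -1) + G.ch p := by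
  simp [ch]

lemma bdry_zero : G.bdry 0 = 0 := Finsupp.sum_zero_index

lemma bdry_single (e : G.E) (c : ℤ) :
    G.bdry (Finsupp.single e c) =
      Finsupp.single (G.tgt e) c - Finsupp.single (G.src e) c := by
  classical
  rw [bdry, Finsupp.sum_single_index]
  simp

lemma bdry_add (α β : G.E →₀ ℤ) : G.bdry (α + β) = G.bdry α + G.bdry β := by
  classical
  rw [bdry, bdry, bdry, Finsupp.sum_add_index]
  · intro e _; simp
  · intro e _ c d
    simp [Finsupp.single_add]
    abel

lemma bdry_sub (α β : G.E →₀ ℤ) : G.bdry (α - β) = G.bdry α - G.bdry β := by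
  classical
  rw [bdry, bdry, bdry, Finsupp.sum_sub_index]
  intro e c d
  simp [Finsupp.single_sub]
  abel

lemma bdry_ch_arc {p : List G.Step} {a b : G.V} (h : G.IsArc p a b) :
    G.bdry (G.ch p) = Finsupp.single b 1 - Finsupp.single a 1 := by
  induction p generalizing a with
  | nil =>
    rw [isArc_nil] at h
    rw [ch_nil, bdry_zero, h, sub_self]
  | cons s rest ih =>
    rw [isArc_cons] at h
    rw [ch_cons, bdry_add, bdry_single, ih h.2, ← h.1]
    rcases s with ⟨e, bb⟩
    cases bb <;> simp [stepSrc, stepTgt] <;> abel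

lemma ch_apply_not_mem {p : List G.Step} {e : G.E} (h : e ∉ p.map Prod.fst) :
    G.ch p e = 0 := by
  classical
  induction p with
  | nil => simp [ch_nil]
  | cons s rest ih =>
    simp only [List.map_cons, List.mem_cons, not_or] at h
    rw [ch_cons, Finsupp.add_apply, ih h.2, Finsupp.single_apply, if_neg (fun hh => h.1 hh.symm)]
    simp

lemma abs_sub_ch {α : G.E →₀ ℤ} {p : List G.Step}
    (hnd : (p.map Prod.fst).Nodup) (hok : ∀ s ∈ p, Ok α s) (e : G.E) :
    |α e - G.ch p e| = |α e| - |G.ch p e| := by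
  classical
  induction p with
  | nil => simp [ch_nil]
  | cons s rest ih =>
    simp only [List.map_cons, List.nodup_cons] at hnd
    by_cases he : e = s.1
    · have h0 : G.ch rest e = 0 := ch_apply_not_mem (by rw [he]; exact hnd.1)
      have hOk : Ok α s := hok s (List.mem_cons_self)
      rw [ch_cons, Finsupp.add_apply, Finsupp.single_apply, if_pos he.symm, h0, add_zero, he]
      unfold Ok at hOk
      by_cases hb : s.2
      · rw [if_pos hb] at hOk ⊢
        rw [abs_of_nonneg (by omega : (0:ℤ) ≤ α s.1 - 1), abs_of_pos hOk, abs_one]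
      · rw [if_neg hb] at hOk ⊢
        rw [show α s.1 - (-1) = α s.1 + 1 by ring, abs_of_nonpos (by omega : α s.1 + 1 ≤ 0),
          abs_of_neg hOk, abs_neg, abs_one]
        ring
    · rw [ch_cons, Finsupp.add_apply, Finsupp.single_apply, if_neg (fun hh => he hh.symm), zero_add]
      exact ih hnd.2 (fun t ht => hok t (List.mem_cons_of_mem s ht))

lemma edges_nodup {α : G.E →₀ ℤ} {p : List G.Step}
    (hsrc : (p.map G.stepSrc).Nodup) (hok : ∀ s ∈ p, Ok α s) :
    (p.map Prod.fst).Nodup := by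
  have hp : p.Nodup := hsrc.of_map _
  refine hp.map_on ?_
  intro x hx y hy hxy
  have h1 := hok x hx
  have h2 := hok y hy
  unfold Ok at h1 h2
  rw [hxy] at h1
  have : x.2 = y.2 := by
    rcases x with ⟨e, bx⟩; rcases y with ⟨f, by'⟩
    cases bx <;> cases by' <;> simp_all <;> omega
  exact Prod.ext hxy this

lemma l1_nonneg (α : G.E →₀ ℤ) : 0 ≤ G.l1 α :=
  Finset.sum_nonneg fun _ _ => abs_nonneg _

lemma l1_zero : G.l1 0 = 0 := Finsupp.sum_zero_index

lemma l1_eq_sum {α : G.E →₀ ℤ} {T : Finset G.E} (h : α.support ⊆ T) :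
    G.l1 α = ∑ e ∈ T, |α e| := by
  rw [l1, Finsupp.sum]
  exact Finset.sum_subset h (fun e _ he => by
    simp [Finsupp.notMem_support_iff.mp he])

lemma one_le_l1 {α : G.E →₀ ℤ} {e : G.E} (h : α e ≠ 0) : 1 ≤ G.l1 α := by
  have he : e ∈ α.support := Finsupp.mem_support_iff.mpr h
  calc (1 : ℤ) ≤ |α e| := by
        have := abs_pos.mpr h
        linarith
  _ ≤ ∑ f ∈ α.support, |α f| :=
      Finset.single_le_sum (fun f _ => abs_nonneg (α f)) he
  _ = G.l1 α := rfl

lemma exists_next {α : G.E →₀ ℤ} (h0 : G.bdry α = 0) {t : G.Step} (ht : Ok α t) :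
    ∃ s, Ok α s ∧ G.stepSrc s = G.stepTgt t := by
  classical
  by_contra hcon
  push_neg at hcon
  set v := G.stepTgt t with hv
  have hsrc : ∀ e, G.src e = v → α e ≤ 0 := by
    intro e he
    by_contra h
    push_neg at h
    exact hcon (e, true) (by simpa [Ok] using h) (by simpa [stepSrc] using he)
  have htgt : ∀ e, G.tgt e = v → 0 ≤ α e := by
    intro e he
    by_contra h
    push_neg at h
    exact hcon (e, false) (by simpa [Ok] using h) (by simpa [stepSrc] using he)
  have hbv : (G.bdry α) v =
      ∑ e ∈ α.support, ((if G.tgt e = v then α e else 0) - (if G.src e = v then α e else 0)) := by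
    rw [bdry, Finsupp.sum_apply, Finsupp.sum]
    refine Finset.sum_congr rfl fun e _ => ?_
    rw [Finsupp.sub_apply, Finsupp.single_apply, Finsupp.single_apply]
  have hpos : 0 < ∑ e ∈ α.support, ((if G.tgt e = v then α e else 0) - (if G.src e = v then α e else 0)) := by
    refine Finset.sum_pos' ?_ ?_
    · intro e _
      by_cases h2 : G.tgt e = v <;> by_cases h1 : G.src e = v
      · rw [if_pos h2, if_pos h1]; omega
      · rw [if_pos h2, if_neg h1]
        have := htgt e h2
        omega
      · rw [if_neg h2, if_pos h1]
        have := hsrc e h1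
        omega
      · rw [if_neg h2, if_neg h1]; omega
    · refine ⟨t.1, ?_, ?_⟩
      · rw [Finsupp.mem_support_iff]
        unfold Ok at ht
        split at ht <;> omega
      · rcases t with ⟨e, bb⟩
        cases bb <;> dsimp only
        · have ht' : α e < 0 := by simpa [Ok] using ht
          have hsv : G.src e = v := by rw [hv]; simp [stepTgt]
          have htv : G.tgt e ≠ v := fun h => by have := htgt e h; omega
          rw [if_neg htv, if_pos hsv]
          omega
        · have ht' : 0 < α e := by simpa [Ok] using ht
          have htv : G.tgt e = v := by rw [hv]; simp [stepTgt]
          have hsv : G.src e ≠ v := fun h => by have := hsrc e h; omega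
          rw [if_pos htv, if_neg hsv]
          omega
  rw [← hbv, h0] at hpos
  simp at hpos

lemma exists_simple {α : G.E →₀ ℤ} (h0 : G.bdry α = 0) (hne : α ≠ 0) :
    ∃ p, G.IsSimpleClosedCurve p ∧ ∀ s ∈ p, Ok α s := by
  classical
  obtain ⟨e₀, he₀⟩ : ∃ e, α e ≠ 0 := by
    by_contra h
    push_neg at h
    exact hne (Finsupp.ext h)
  obtain ⟨s₀, hs₀⟩ : ∃ s : G.Step, Ok α s := by
    rcases lt_or_gt_of_ne he₀ with h | h
    · exact ⟨(e₀, false), by simpa [Ok] using h⟩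
    · exact ⟨(e₀, true), by simpa [Ok] using h⟩
  set S : Finset G.V := α.support.image G.src ∪ α.support.image G.tgt with hS
  have hmemS : ∀ s : G.Step, Ok α s → G.stepSrc s ∈ S := by
    intro s hs
    have hsup : s.1 ∈ α.support := by
      rw [Finsupp.mem_support_iff]
      unfold Ok at hs
      split at hs <;> omega
    rcases s with ⟨e, bb⟩
    cases bb
    · exact Finset.mem_union_right _ (Finset.mem_image_of_mem _ hsup)
    · exact Finset.mem_union_left _ (Finset.mem_image_of_mem _ hsup)
  have key : ∀ n : ℕ, (∃ p, G.IsSimpleClosedCurve p ∧ ∀ s ∈ p, Ok α s) ∨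
      (∃ p a b, G.IsArc p a b ∧ (∀ s ∈ p, Ok α s) ∧ (p.map G.stepSrc).Nodup ∧
        p.length = n ∧ ∃ s, Ok α s ∧ G.stepSrc s = b) := by
    intro n
    induction n with
    | zero =>
      exact Or.inr ⟨[], G.stepSrc s₀, G.stepSrc s₀, rfl, by simp, by simp, rfl, s₀, hs₀, rfl⟩
    | succ n ih =>
      rcases ih with h | ⟨p, a, b, harc, hok, hnd, hlen, s, hsOk, hsrcs⟩
      · exact Or.inl h
      by_cases hb : b ∈ p.map G.stepSrc
      · left
        obtain ⟨t, ht, hts⟩ := List.mem_map.mp hb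
        obtain ⟨p₁, p₂, rfl⟩ := List.append_of_mem ht
        obtain ⟨c, hc⟩ := isArc_append_right (q := t :: p₂) harc
        have hcb : c = b := by
          rw [isArc_cons] at hc
          rw [← hc.1, hts]
        subst hcb
        refine ⟨t :: p₂, ⟨by simp, ⟨c, hc⟩, ?_⟩, fun u hu => hok u ?_⟩
        · have hsub : ((t :: p₂).map G.stepSrc).Sublist ((p₁ ++ t :: p₂).map G.stepSrc) := by
            rw [List.map_append]
            exact List.sublist_append_right _ _
          exact hnd.sublist hsub
        · exact List.mem_append_right p₁ hu
      · right
        obtain ⟨s', hs'Ok, hs'src⟩ := exists_next h0 hsOk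
        refine ⟨p ++ [s], a, G.stepTgt s, ?_, ?_, ?_, ?_, s', hs'Ok, hs'src⟩
        · exact isArc_append harc (by exact ⟨hsrcs, rfl⟩)
        · intro u hu
          rcases List.mem_append.mp hu with h | h
          · exact hok u h
          · rw [List.mem_singleton.mp h]; exact hsOk
        · rw [List.map_append]
          simp only [List.map_cons, List.map_nil]
          rw [List.nodup_append]
          exact ⟨hnd, List.nodup_singleton _, fun x hx y hy hxy => hb (by rw [List.mem_singleton.mp hy, hsrcs] at hxy; rw [← hxy]; exact hx)⟩
        · simp [hlen]
  rcases key (S.card + 1) with h | ⟨p, a, b, _, hok, hnd, hlen, _⟩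
  · exact h
  · exfalso
    have h1 : (p.map G.stepSrc).toFinset ⊆ S := by
      intro v hv
      rw [List.mem_toFinset] at hv
      obtain ⟨u, hu, rfl⟩ := List.mem_map.mp hv
      exact hmemS u (hok u hu)
    have h2 : (p.map G.stepSrc).toFinset.card = p.length := by
      rw [List.toFinset_card_of_nodup hnd, List.length_map]
    have h3 := Finset.card_le_card h1
    omega

lemma l1_sub_curve {α : G.E →₀ ℤ} {p : List G.Step}
    (hnd : (p.map Prod.fst).Nodup) (hok : ∀ s ∈ p, Ok α s) :
    G.l1 (α - G.ch p) = G.l1 α - G.l1 (G.ch p) := by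
  classical
  set T : Finset G.E := α.support ∪ (G.ch p).support with hT
  have h1 : (α - G.ch p).support ⊆ T := Finsupp.support_sub
  have h2 : α.support ⊆ T := Finset.subset_union_left
  have h3 : (G.ch p).support ⊆ T := Finset.subset_union_right
  rw [l1_eq_sum h1, l1_eq_sum h2, l1_eq_sum h3, ← Finset.sum_sub_distrib]
  refine Finset.sum_congr rfl fun e _ => ?_
  rw [Finsupp.sub_apply]
  exact abs_sub_ch hnd hok e

lemma one_le_l1_ch {p : List G.Step} (hne : p ≠ [])
    (hnd : (p.map Prod.fst).Nodup) : 1 ≤ G.l1 (G.ch p) := by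
  classical
  rcases p with _ | ⟨s, rest⟩
  · exact absurd rfl hne
  simp only [List.map_cons, List.nodup_cons] at hnd
  have h0 : G.ch rest s.1 = 0 := ch_apply_not_mem hnd.1
  have : G.ch (s :: rest) s.1 = if s.2 then 1 else -1 := by
    rw [ch_cons, Finsupp.add_apply, Finsupp.single_apply, if_pos rfl, h0, add_zero]
  refine one_le_l1 (e := s.1) ?_
  rw [this]
  split <;> omega

lemma main_aux (G : CWGraph) : ∀ n : ℕ, ∀ α : G.E →₀ ℤ, G.bdry α = 0 → (G.l1 α).toNat ≤ n →
    ∃ (k : ℕ) (γ : Fin k → List G.Step),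
      (∀ i, G.IsSimpleClosedCurve (γ i)) ∧
      α = ∑ i, G.ch (γ i) ∧
      G.l1 α = ∑ i, G.l1 (G.ch (γ i)) := by
  intro n
  induction n with
  | zero =>
    intro α h0 hl
    have hz : α = 0 := by
      by_contra h
      obtain ⟨e, he⟩ : ∃ e, α e ≠ 0 := by
        by_contra hh
        push_neg at hh
        exact h (Finsupp.ext hh)
      have := one_le_l1 he
      omega
    exact ⟨0, Fin.elim0, fun i => i.elim0, by simp [hz], by simp [hz, l1_zero]⟩
  | succ n ih =>
    intro α h0 hl
    by_cases hz : α = 0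
    · exact ⟨0, Fin.elim0, fun i => i.elim0, by simp [hz], by simp [hz, l1_zero]⟩
    obtain ⟨p, hp, hok⟩ := exists_simple h0 hz
    have hnd : (p.map Prod.fst).Nodup := edges_nodup hp.2.2 hok
    set β := α - G.ch p with hβ
    have hβ0 : G.bdry β = 0 := by
      obtain ⟨a, ha⟩ := hp.2.1
      rw [hβ, bdry_sub, bdry_ch_arc ha, h0, sub_self, sub_zero]
    have hl1 : G.l1 β = G.l1 α - G.l1 (G.ch p) := l1_sub_curve hnd hok
    have hchp : 1 ≤ G.l1 (G.ch p) := one_le_l1_ch hp.1 hnd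
    have hβn : (G.l1 β).toNat ≤ n := by
      have h4 := l1_nonneg (G := G) β
      omega
    obtain ⟨k, γ, hγ, hsum, hl1sum⟩ := ih β hβ0 hβn
    refine ⟨k + 1, Fin.cons p γ, ?_, ?_, ?_⟩
    · intro i
      refine Fin.cases ?_ ?_ i
      · exact hp
      · intro j
        exact hγ j
    · rw [Fin.sum_univ_succ]
      simp only [Fin.cons_zero, Fin.cons_succ]
      rw [← hsum, hβ]
      abel
    · rw [Fin.sum_univ_succ]
      simp only [Fin.cons_zero, Fin.cons_succ]
      rw [← hl1sum, hl1]
      ring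

end CWGraph

/-- **Every 1-cycle decomposes into embedded closed curves with no cancellation.**
If `α` is a cellular 1-cycle on a graph `G`, then there exist embedded closed
curves `γ₁, …, γ_k` in `G` such that `α = Σᵢ ch(γᵢ)` and
`‖α‖₁ = Σᵢ ‖ch(γᵢ)‖₁`. -/
theorem cycle_decomposes_into_simple_curves (G : CWGraph) (α : G.E →₀ ℤ)
    (hcycle : G.bdry α = 0) :
    ∃ (k : ℕ) (γ : Fin k → List G.Step),
      (∀ i, G.IsSimpleClosedCurve (γ i)) ∧
      α = ∑ i, G.ch (γ i) ∧
      G.l1 α = ∑ i, G.l1 (G.ch (γ i)) :=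
  CWGraph.main_aux G (G.l1 α).toNat α hcycle le_rfl
end

section
/- Let X be the CW complex given by the unit cubical lattice in ℝ³. Then every cellular 1-cycle α on X (with ℤ coefficients) bounds a cellular 2-chain C on X with ∂C = α and ‖C‖_∞ ≤ ‖α‖₁, where ‖C‖_∞ is the maximum absolute value of a coefficient of C and ‖α‖₁ is the sum of absolute values of the coefficients of α. -/
/-!
STATEMENT 6: Let `X` be the CW complex given by the unit cubical lattice in
`ℝ³`: vertices at `ℤ³`, edges the unit lattice segments, 2-cells the unit
lattice squares.  Every cellular 1-cycle `α` on `X` (integer coefficients)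
bounds a cellular 2-chain `C` with `∂C = α` and `‖C‖_∞ ≤ ‖α‖₁`.

Combinatorial model: a vertex is a point of `ℤ³`; an edge is a pair `(v, i)`
(the segment from `v` to `v + eᵢ`); a square is a triple `(v, i, j)` with
`i < j` (the unit square with corner `v` spanned by `eᵢ, eⱼ`).  The boundary
maps are the standard cubical ones. -/

namespace CubicalLattice

/-- A vertex of the unit cubical lattice in `ℝ³`: a point of `ℤ³`. -/
abbrev Vert := Fin 3 → ℤ

/-- An edge of the lattice: `(v, i)` is the unit segment from `v` to `v + eᵢ`. -/
abbrev Edge := Vert × Fin 3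

/-- A square (2-cell) of the lattice: `(v, i, j)` with `i < j` is the unit
square with corner `v` spanned by the directions `eᵢ` and `eⱼ`. -/
abbrev Square := {q : Vert × Fin 3 × Fin 3 // q.2.1 < q.2.2}

/-- The `i`-th coordinate unit vector. -/
noncomputable def e (i : Fin 3) : Vert := Pi.single i 1

/-- The cubical boundary of an edge. -/
noncomputable def bdryEdge (ed : Edge) : Vert →₀ ℤ :=
  Finsupp.single (ed.1 + e ed.2) 1 - Finsupp.single ed.1 1

/-- The boundary of a cellular 1-chain. -/
noncomputable def bdry1 (α : Edge →₀ ℤ) : Vert →₀ ℤ :=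
  α.sum fun ed c => c • bdryEdge ed

/-- The cubical boundary of a square `(v, i, j)`:
`(v,i) + (v+eᵢ, j) − (v+eⱼ, i) − (v, j)`. -/
noncomputable def bdrySquare (sq : Square) : Edge →₀ ℤ :=
  Finsupp.single (sq.1.1, sq.1.2.1) 1
    + Finsupp.single (sq.1.1 + e sq.1.2.1, sq.1.2.2) 1
    - Finsupp.single (sq.1.1 + e sq.1.2.2, sq.1.2.1) 1
    - Finsupp.single (sq.1.1, sq.1.2.2) 1

/-- The boundary of a cellular 2-chain. -/
noncomputable def bdry2 (C : Square →₀ ℤ) : Edge →₀ ℤ :=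
  C.sum fun sq c => c • bdrySquare sq

/-- The `L¹`-norm of a cellular 1-chain. -/
def l1 (α : Edge →₀ ℤ) : ℤ := α.sum fun _ c => |c|

end CubicalLattice

/-! ### Auxiliary development -/

namespace CubicalLattice

open Finsupp

/-! #### The staircase chain on `ℤ` -/

/-- Indicator chain of the integer interval between `0` and `n`. -/
noncomputable def stack (n : ℤ) : ℤ →₀ ℤ where
  support := Finset.Ico (min n 0) (max n 0)
  toFun x := if 0 ≤ x ∧ x < n then 1 else if n ≤ x ∧ x < 0 then -1 else 0
  mem_support_toFun x := by
    simp only [Finset.mem_Ico]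
    split_ifs <;> simp <;> omega

lemma stack_apply (n x : ℤ) :
    stack n x = if 0 ≤ x ∧ x < n then 1 else if n ≤ x ∧ x < 0 then -1 else 0 := rfl

lemma stack_zero : stack 0 = 0 := by
  ext x; rw [stack_apply]; simp; omega

lemma stack_succ (n : ℤ) : stack (n + 1) = stack n + Finsupp.single n 1 := by
  ext x
  rw [Finsupp.add_apply, stack_apply, stack_apply, Finsupp.single_apply]
  split_ifs <;> omega

lemma abs_stack_le (n x : ℤ) : |stack n x| ≤ 1 := by
  rw [stack_apply]; split_ifs <;> simp

/-! #### Coordinate lemmas -/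

/-- Replace the `d`-th coordinate of `v` by `k`. -/
def upd (v : Vert) (d : Fin 3) (k : ℤ) : Vert := Function.update v d k

lemma upd_add_e (v : Vert) (d i : Fin 3) (h : i ≠ d) (k : ℤ) :
    upd v d k + e i = upd (v + e i) d k := by
  funext x
  by_cases hx : x = d
  · subst hx
    simp [upd, e, Pi.single_eq_of_ne (Ne.symm h)]
  · simp [upd, e, Function.update_of_ne hx]

lemma upd_add_ed (v : Vert) (d : Fin 3) (k : ℤ) :
    upd v d k + e d = upd v d (k + 1) := by
  funext x
  by_cases hx : x = d
  · subst hx; simp [upd, e]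
  · simp [upd, e, Function.update_of_ne hx, Pi.single_eq_of_ne hx]

lemma upd_self (v : Vert) (d : Fin 3) : upd v d (v d) = v :=
  Function.update_eq_self d v

lemma upd_apply_d (v : Vert) (d : Fin 3) (k : ℤ) : upd v d k d = k := by simp [upd]

lemma add_e_apply_d (v : Vert) (d i : Fin 3) (h : i ≠ d) : (v + e i) d = v d := by
  simp [e, Pi.single_eq_of_ne (Ne.symm h)]

lemma upd_inj (v : Vert) (d : Fin 3) : Function.Injective (upd v d) := by
  intro a b hab
  have := congrFun hab d
  simpa [upd] using this

/-! #### Basic properties of the boundary maps -/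

lemma bdry2_add (C D : Square →₀ ℤ) : bdry2 (C + D) = bdry2 C + bdry2 D := by
  unfold bdry2
  exact Finsupp.sum_add_index' (fun sq => zero_smul ℤ (bdrySquare sq))
    (fun sq b₁ b₂ => add_smul b₁ b₂ (bdrySquare sq))

lemma bdry2_single (sq : Square) (c : ℤ) : bdry2 (Finsupp.single sq c) = c • bdrySquare sq := by
  unfold bdry2
  exact Finsupp.sum_single_index (zero_smul ℤ _)

lemma bdry2_zero : bdry2 0 = 0 := by simp [bdry2]

/-! #### Sweeping prisms -/

/-- The prism of squares sweeping the edge direction `i` along direction `d > i`,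
between heights `0` and `n`. -/
noncomputable def sweepLt (w : Vert) (i d : Fin 3) (h : i < d) (n : ℤ) : Square →₀ ℤ :=
  Finsupp.mapDomain (fun k => (⟨(upd w d k, i, d), h⟩ : Square)) (stack n)

/-- The prism of squares sweeping the edge direction `i` along direction `d < i`. -/
noncomputable def sweepGt (w : Vert) (i d : Fin 3) (h : d < i) (n : ℤ) : Square →₀ ℤ :=
  Finsupp.mapDomain (fun k => (⟨(upd w d k, d, i), h⟩ : Square)) (stack n)

/-- The column of `d`-edges below the vertex position `n`. -/
noncomputable def kcol (w : Vert) (d : Fin 3) (n : ℤ) : Edge →₀ ℤ :=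
  Finsupp.mapDomain (fun k => ((upd w d k, d) : Edge)) (stack n)

lemma sweepLt_succ (w : Vert) (i d : Fin 3) (h : i < d) (n : ℤ) :
    sweepLt w i d h (n + 1)
      = sweepLt w i d h n + Finsupp.single ⟨(upd w d n, i, d), h⟩ 1 := by
  unfold sweepLt
  rw [stack_succ, Finsupp.mapDomain_add, Finsupp.mapDomain_single]

lemma sweepGt_succ (w : Vert) (i d : Fin 3) (h : d < i) (n : ℤ) :
    sweepGt w i d h (n + 1)
      = sweepGt w i d h n + Finsupp.single ⟨(upd w d n, d, i), h⟩ 1 := by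
  unfold sweepGt
  rw [stack_succ, Finsupp.mapDomain_add, Finsupp.mapDomain_single]

lemma kcol_succ (w : Vert) (d : Fin 3) (n : ℤ) :
    kcol w d (n + 1) = kcol w d n + Finsupp.single (upd w d n, d) 1 := by
  unfold kcol
  rw [stack_succ, Finsupp.mapDomain_add, Finsupp.mapDomain_single]

lemma bdrySquare_mk (w : Vert) (i j : Fin 3) (h : i < j) :
    bdrySquare ⟨(w, i, j), h⟩
      = Finsupp.single (w, i) 1 + Finsupp.single (w + e i, j) 1
        - Finsupp.single (w + e j, i) 1 - Finsupp.single (w, j) 1 := rfl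

lemma bdry2_sweepLt (w : Vert) (i d : Fin 3) (h : i < d) (n : ℤ) :
    bdry2 (sweepLt w i d h n)
      = Finsupp.single (upd w d 0, i) 1 - Finsupp.single (upd w d n, i) 1
        + kcol (w + e i) d n - kcol w d n := by
  have hne : i ≠ d := ne_of_lt h
  induction n using Int.induction_on with
  | zero => simp [sweepLt, kcol, stack_zero, bdry2_zero, Finsupp.mapDomain_zero]
  | succ n ih =>
      rw [sweepLt_succ, bdry2_add, ih, bdry2_single, one_smul,
        kcol_succ (w + e i) d n, kcol_succ w d n]
      rw [bdrySquare_mk, upd_add_ed, upd_add_e w d i hne]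
      abel
  | pred n ih =>
      have hstep := sweepLt_succ w i d h (-(n:ℤ) - 1)
      rw [show (-(n:ℤ) - 1) + 1 = -(n:ℤ) by ring] at hstep
      have hk1 := kcol_succ (w + e i) d (-(n:ℤ) - 1)
      have hk2 := kcol_succ w d (-(n:ℤ) - 1)
      rw [show (-(n:ℤ) - 1) + 1 = -(n:ℤ) by ring] at hk1 hk2
      rw [hstep, bdry2_add, bdry2_single, one_smul] at ih
      rw [bdrySquare_mk, upd_add_ed, upd_add_e w d i hne,
        show (-(n:ℤ) - 1) + 1 = -(n:ℤ) by ring, hk1, hk2] at ih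
      rw [eq_sub_of_add_eq ih]
      abel

lemma bdry2_neg (C : Square →₀ ℤ) : bdry2 (-C) = -bdry2 C := by
  have h := bdry2_add (-C) C
  rw [neg_add_cancel, bdry2_zero] at h
  exact eq_neg_of_add_eq_zero_left h.symm

lemma bdry2_sweepGt (w : Vert) (i d : Fin 3) (h : d < i) (n : ℤ) :
    bdry2 (sweepGt w i d h n)
      = Finsupp.single (upd w d n, i) 1 - Finsupp.single (upd w d 0, i) 1
        - kcol (w + e i) d n + kcol w d n := by
  have hne : i ≠ d := (ne_of_lt h).symm
  induction n using Int.induction_on with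
  | zero => simp [sweepGt, kcol, stack_zero, bdry2_zero, Finsupp.mapDomain_zero]
  | succ n ih =>
      rw [sweepGt_succ, bdry2_add, ih, bdry2_single, one_smul,
        kcol_succ (w + e i) d n, kcol_succ w d n]
      rw [bdrySquare_mk, upd_add_ed, upd_add_e w d i hne]
      abel
  | pred n ih =>
      have hstep := sweepGt_succ w i d h (-(n:ℤ) - 1)
      rw [show (-(n:ℤ) - 1) + 1 = -(n:ℤ) by ring] at hstep
      have hk1 := kcol_succ (w + e i) d (-(n:ℤ) - 1)
      have hk2 := kcol_succ w d (-(n:ℤ) - 1)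
      rw [show (-(n:ℤ) - 1) + 1 = -(n:ℤ) by ring] at hk1 hk2
      rw [hstep, bdry2_add, bdry2_single, one_smul] at ih
      rw [bdrySquare_mk, upd_add_ed, upd_add_e w d i hne,
        show (-(n:ℤ) - 1) + 1 = -(n:ℤ) by ring, hk1, hk2] at ih
      rw [eq_sub_of_add_eq ih]
      abel

/-! #### The filling of a single edge and its boundary -/

/-- Column of `d`-edges attached to vertex `v`. -/
noncomputable def Kv (d : Fin 3) (v : Vert) : Edge →₀ ℤ := kcol v d (v d)

lemma kcol_add_ed (v : Vert) (d : Fin 3) (n : ℤ) : kcol (v + e d) d n = kcol v d n := by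
  unfold kcol
  congr 1
  funext k
  rw [show upd (v + e d) d k = upd v d k by
    funext x
    by_cases hx : x = d
    · subst hx; simp [upd]
    · simp [upd, Function.update_of_ne hx, e, Pi.single_eq_of_ne hx]]

lemma Kv_add_ed (d : Fin 3) (v : Vert) :
    Kv d (v + e d) = Kv d v + Finsupp.single (v, d) 1 := by
  unfold Kv
  rw [kcol_add_ed, show (v + e d) d = v d + 1 by simp [e], kcol_succ, upd_self]

lemma Kv_add_e (d i : Fin 3) (hne : i ≠ d) (v : Vert) :
    Kv d (v + e i) = kcol (v + e i) d (v d) := by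
  rw [Kv, add_e_apply_d v d i hne]

/-- The 2-chain filling the prism over a single edge, in direction `d`. -/
noncomputable def fill (d : Fin 3) (ed : Edge) : Square →₀ ℤ :=
  if h : ed.2 < d then -sweepLt ed.1 ed.2 d h (ed.1 d)
  else if h' : d < ed.2 then sweepGt ed.1 ed.2 d h' (ed.1 d)
  else 0

/-- The projection of a single edge killing coordinate `d`. -/
noncomputable def pr (d : Fin 3) (ed : Edge) : Edge →₀ ℤ :=
  if ed.2 = d then 0 else Finsupp.single (upd ed.1 d 0, ed.2) 1

lemma key_identity (d : Fin 3) (ed : Edge) :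
    bdry2 (fill d ed)
      = Finsupp.single ed 1 - pr d ed - Kv d (ed.1 + e ed.2) + Kv d ed.1 := by
  obtain ⟨v, i⟩ := ed
  rcases lt_trichotomy i d with hlt | heq | hgt
  · rw [show fill d (v, i) = -sweepLt v i d hlt (v d) by
        simp [fill, hlt]]
    rw [bdry2_neg, bdry2_sweepLt, upd_self,
      show pr d (v, i) = Finsupp.single (upd v d 0, i) 1 by
        simp [pr, ne_of_lt hlt],
      Kv_add_e d i (ne_of_lt hlt) v, Kv]
    abel
  · subst heq
    rw [show fill i (v, i) = 0 by simp [fill],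
      show pr i (v, i) = 0 by simp [pr], bdry2_zero, Kv_add_ed]
    abel
  · rw [show fill d (v, i) = sweepGt v i d hgt (v d) by
        simp [fill, hgt, not_lt_of_gt hgt]]
    rw [bdry2_sweepGt, upd_self,
      show pr d (v, i) = Finsupp.single (upd v d 0, i) 1 by
        simp [pr, (ne_of_lt hgt).symm],
      Kv_add_e d i (ne_of_lt hgt).symm v, Kv]

/-! #### Linear versions of the maps -/

noncomputable def B1 : (Edge →₀ ℤ) →ₗ[ℤ] (Vert →₀ ℤ) := Finsupp.linearCombination ℤ bdryEdge
noncomputable def B2 : (Square →₀ ℤ) →ₗ[ℤ] (Edge →₀ ℤ) := Finsupp.linearCombination ℤ bdrySquare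
noncomputable def FL (d : Fin 3) : (Edge →₀ ℤ) →ₗ[ℤ] (Square →₀ ℤ) :=
  Finsupp.linearCombination ℤ (fill d)
noncomputable def PR (d : Fin 3) : (Edge →₀ ℤ) →ₗ[ℤ] (Edge →₀ ℤ) :=
  Finsupp.linearCombination ℤ (pr d)
noncomputable def KC (d : Fin 3) : (Vert →₀ ℤ) →ₗ[ℤ] (Edge →₀ ℤ) :=
  Finsupp.linearCombination ℤ (Kv d)

lemma bdry1_eq (x : Edge →₀ ℤ) : bdry1 x = B1 x := by
  rw [bdry1, B1, Finsupp.linearCombination_apply]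

lemma bdry2_eq (x : Square →₀ ℤ) : bdry2 x = B2 x := by
  rw [bdry2, B2, Finsupp.linearCombination_apply]

lemma B1_bdrySquare (sq : Square) : B1 (bdrySquare sq) = 0 := by
  obtain ⟨⟨v, i, j⟩, hij⟩ := sq
  rw [bdrySquare_mk]
  rw [map_sub, map_sub, map_add]
  simp only [B1, Finsupp.linearCombination_single, one_smul]
  unfold bdryEdge
  simp only []
  rw [show v + e i + e j = v + e j + e i from add_right_comm v (e i) (e j)]
  abel

lemma B1_B2 (C : Square →₀ ℤ) : B1 (B2 C) = 0 := by
  suffices h : B1 ∘ₗ B2 = 0 by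
    have := congrArg (fun f => f C) h
    simpa using this
  apply Finsupp.lhom_ext
  intro sq b
  simp only [LinearMap.comp_apply, LinearMap.zero_apply, B2,
    Finsupp.linearCombination_single]
  rw [map_smul, B1_bdrySquare, smul_zero]

lemma main_id (d : Fin 3) (x : Edge →₀ ℤ) :
    B2 (FL d x) = x - PR d x - KC d (B1 x) := by
  suffices h : B2 ∘ₗ FL d = LinearMap.id - PR d - KC d ∘ₗ B1 by
    have := congrArg (fun f => f x) h
    simpa using this
  apply Finsupp.lhom_ext
  intro ed b
  simp only [LinearMap.comp_apply, LinearMap.sub_apply, LinearMap.id_apply,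
    FL, PR, B1, Finsupp.linearCombination_single]
  rw [map_smul, ← bdry2_eq, key_identity]
  have hk : (KC d) (b • bdryEdge ed) = b • (Kv d (ed.1 + e ed.2) - Kv d ed.1) := by
    rw [map_smul]
    congr 1
    rw [bdryEdge, map_sub]
    simp [KC, Finsupp.linearCombination_single]
  rw [hk]
  simp only [smul_add, smul_sub, Finsupp.smul_single, smul_eq_mul, mul_one]
  abel

/-! #### Coefficient bounds -/

lemma mapDomain_stack_abs_le {β : Type*} (f : ℤ → β) (hf : Function.Injective f)
    (n : ℤ) (x : β) : |Finsupp.mapDomain f (stack n) x| ≤ 1 := by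
  by_cases hx : x ∈ Set.range f
  · obtain ⟨k, rfl⟩ := hx
    rw [Finsupp.mapDomain_apply hf]
    exact abs_stack_le n k
  · rw [Finsupp.mapDomain_notin_range _ _ hx]
    norm_num

lemma fill_abs_le (d : Fin 3) (ed : Edge) (sq : Square) : |fill d ed sq| ≤ 1 := by
  unfold fill
  split_ifs with h h'
  · rw [Finsupp.neg_apply, abs_neg]
    exact mapDomain_stack_abs_le _
      (fun a b hab => upd_inj ed.1 d (congrArg (fun s : Square => s.1.1) hab)) _ _
  · exact mapDomain_stack_abs_le _
      (fun a b hab => upd_inj ed.1 d (congrArg (fun s : Square => s.1.1) hab)) _ _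
  · simp

lemma fill_two_apply (ed : Edge) (sq : Square) (hsq : sq.1.2.2 ≠ 2) :
    fill 2 ed sq = 0 := by
  unfold fill
  split_ifs with h h'
  · rw [Finsupp.neg_apply, sweepLt,
      Finsupp.mapDomain_notin_range _ _ (by rintro ⟨k, rfl⟩; exact hsq rfl), neg_zero]
  · exfalso
    have h3 := ed.2.isLt
    rw [Fin.lt_def] at h'
    simp only [Fin.val_two] at h'
    omega
  · simp

lemma fill_one_apply (ed : Edge) (hed : ed.2 ≠ 2) (sq : Square) (hsq : sq.1.2.2 = 2) :
    fill 1 ed sq = 0 := by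
  unfold fill
  split_ifs with h h'
  · have h12 : (1 : Fin 3) ≠ 2 := by decide
    rw [Finsupp.neg_apply, sweepLt,
      Finsupp.mapDomain_notin_range _ _
        (by rintro ⟨k, rfl⟩; exact h12 hsq), neg_zero]
  · exfalso
    apply hed
    have h3 := ed.2.isLt
    rw [Fin.lt_def] at h'
    simp only [Fin.val_one] at h'
    exact Fin.ext (by omega)
  · simp

/-! #### `l1` norm lemmas -/

lemma l1_eq (x : Edge →₀ ℤ) : l1 x = ∑ ed ∈ x.support, |x ed| := rfl

lemma l1_nonneg (x : Edge →₀ ℤ) : 0 ≤ l1 x :=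
  Finset.sum_nonneg fun _ _ => abs_nonneg _

lemma l1_eq_superset (x : Edge →₀ ℤ) (s : Finset Edge) (hs : x.support ⊆ s) :
    l1 x = ∑ ed ∈ s, |x ed| := by
  rw [l1_eq]
  exact Finset.sum_subset hs fun a _ ha => by
    rw [Finsupp.notMem_support_iff.mp ha, abs_zero]

lemma l1_add_le (x y : Edge →₀ ℤ) : l1 (x + y) ≤ l1 x + l1 y := by
  rw [l1_eq_superset (x + y) (x.support ∪ y.support) Finsupp.support_add,
    l1_eq_superset x (x.support ∪ y.support) Finset.subset_union_left,
    l1_eq_superset y (x.support ∪ y.support) Finset.subset_union_right,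
    ← Finset.sum_add_distrib]
  apply Finset.sum_le_sum
  intro ed _
  rw [Finsupp.add_apply]
  exact abs_add_le _ _

lemma l1_zero : l1 0 = 0 := rfl

lemma l1_finsetSum_le {ι : Type*} (s : Finset ι) (f : ι → Edge →₀ ℤ) :
    l1 (∑ i ∈ s, f i) ≤ ∑ i ∈ s, l1 (f i) := by
  classical
  induction s using Finset.cons_induction with
  | empty => simp [l1_zero]
  | cons a s ha ih =>
      rw [Finset.sum_cons, Finset.sum_cons]
      exact le_trans (l1_add_le _ _) (by linarith)

lemma l1_single (a : Edge) (c : ℤ) : l1 (Finsupp.single a c) = |c| :=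
  Finsupp.sum_single_index abs_zero

lemma l1_PR_le (d : Fin 3) (x : Edge →₀ ℤ) : l1 (PR d x) ≤ l1 x := by
  rw [PR, Finsupp.linearCombination_apply, Finsupp.sum]
  refine le_trans (l1_finsetSum_le _ _) ?_
  rw [l1_eq]
  apply Finset.sum_le_sum
  intro ed _
  unfold pr
  split_ifs
  · rw [smul_zero, l1_zero]
    exact abs_nonneg _
  · rw [Finsupp.smul_single, smul_eq_mul, mul_one, l1_single]

/-! #### Evaluation of linear combinations -/

lemma lc_apply {ι σ : Type*} [DecidableEq σ] (f : ι → σ →₀ ℤ) (x : ι →₀ ℤ) (a : σ) :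
    (Finsupp.linearCombination ℤ f x) a = ∑ i ∈ x.support, x i * (f i a) := by
  rw [Finsupp.linearCombination_apply, Finsupp.sum, Finsupp.finset_sum_apply]
  simp [Finsupp.smul_apply, smul_eq_mul]

lemma abs_lc_apply_le {σ : Type*} [DecidableEq σ] (f : Edge → σ →₀ ℤ) (x : Edge →₀ ℤ)
    (a : σ) (hb : ∀ i ∈ x.support, |f i a| ≤ 1) :
    |Finsupp.linearCombination ℤ f x a| ≤ l1 x := by
  rw [lc_apply]
  refine le_trans (Finset.abs_sum_le_sum_abs _ _) ?_
  rw [l1_eq]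
  apply Finset.sum_le_sum
  intro i hi
  rw [abs_mul]
  exact mul_le_of_le_one_right (abs_nonneg _) (hb i hi)

lemma lc_apply_zero {ι σ : Type*} [DecidableEq σ] (f : ι → σ →₀ ℤ) (x : ι →₀ ℤ)
    (a : σ) (h : ∀ i ∈ x.support, f i a = 0) :
    (Finsupp.linearCombination ℤ f x) a = 0 := by
  rw [lc_apply]
  exact Finset.sum_eq_zero fun i hi => by rw [h i hi, mul_zero]

/-! #### Direction of the support of projections -/

lemma pr_apply_dir_d (d : Fin 3) (a ed : Edge) (hed : ed.2 = d) : pr d a ed = 0 := by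
  unfold pr
  split_ifs with h
  · rfl
  · rw [Finsupp.single_apply, if_neg]
    intro hc
    subst hc
    exact h hed

lemma pr_apply_dir_ne (d : Fin 3) (a ed : Edge) (hne : a.2 ≠ ed.2) : pr d a ed = 0 := by
  unfold pr
  split_ifs with h
  · rfl
  · rw [Finsupp.single_apply, if_neg]
    intro hc
    subst hc
    exact hne rfl

lemma PR_dir_d (d : Fin 3) (x : Edge →₀ ℤ) (ed : Edge) (hed : ed.2 = d) :
    PR d x ed = 0 :=
  lc_apply_zero _ _ _ fun a _ => pr_apply_dir_d d a ed hed

lemma PR_dir_ne (d : Fin 3) (x : Edge →₀ ℤ) (ed : Edge)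
    (h : ∀ a ∈ x.support, a.2 ≠ ed.2) : PR d x ed = 0 :=
  lc_apply_zero _ _ _ fun a ha => pr_apply_dir_ne d a ed (h a ha)

/-! #### A cycle supported on direction-0 edges vanishes -/

lemma cycle_dir0_eq_zero (γ : Edge →₀ ℤ) (hdir : ∀ ed ∈ γ.support, ed.2 = (0 : Fin 3))
    (hcyc : B1 γ = 0) : γ = 0 := by
  classical
  have key : ∀ v : Vert, γ (v, 0) = γ (v + e 0, 0) := by
    intro v
    have h0 : (B1 γ) (v + e 0) = 0 := by rw [hcyc]; rfl
    rw [B1, lc_apply] at h0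
    have hsum : ∑ ed ∈ γ.support, γ ed * bdryEdge ed (v + e 0)
        = ∑ ed ∈ γ.support, ((if ed = ((v, 0) : Edge) then γ ed else 0)
            - (if ed = ((v + e 0, 0) : Edge) then γ ed else 0)) := by
      apply Finset.sum_congr rfl
      intro ed hed
      have h2 : ed.2 = 0 := hdir ed hed
      obtain ⟨w, i⟩ := ed
      simp only at h2
      subst h2
      rw [bdryEdge, Finsupp.sub_apply, Finsupp.single_apply, Finsupp.single_apply]
      simp only [Prod.mk.injEq, and_true]
      simp only [add_left_inj]
      split_ifs <;> ring
    rw [hsum, Finset.sum_sub_distrib, Finset.sum_ite_eq' γ.support ((v, 0) : Edge),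
      Finset.sum_ite_eq' γ.support ((v + e 0, 0) : Edge)] at h0
    have hmem : ∀ a : Edge, (if a ∈ γ.support then γ a else 0) = γ a := by
      intro a
      split_ifs with h
      · rfl
      · exact (Finsupp.notMem_support_iff.mp h).symm
    rw [hmem, hmem] at h0
    linarith
  have hline : ∀ (v : Vert) (n : ℕ), γ (v, 0) = γ (v + n • e 0, 0) := by
    intro v n
    induction n with
    | zero => simp
    | succ n ih =>
        rw [ih, key (v + n • e 0)]
        rw [show v + n • e 0 + e 0 = v + (n + 1) • e 0 by rw [succ_nsmul, ← add_assoc]]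
  have hzero : ∀ v : Vert, γ (v, 0) = 0 := by
    intro v
    have hinj : Function.Injective fun n : ℕ => ((v + n • e 0, 0) : Edge) := by
      intro a b hab
      have h1 : (v + a • e 0) 0 = (v + b • e 0) 0 :=
        congrArg (fun ed : Edge => ed.1 0) hab
      have h2 : ∀ n : ℕ, (v + n • e 0) 0 = v 0 + n := fun n => by simp [e]
      rw [h2 a, h2 b] at h1
      omega
    have hfin : Set.Finite ((fun n : ℕ => ((v + n • e 0, 0) : Edge)) ⁻¹' γ.support) :=
      Set.Finite.preimage hinj.injOn (γ.support.finite_toSet)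
    obtain ⟨n, hn⟩ := hfin.infinite_compl.nonempty
    have hnot : ((v + n • e 0, 0) : Edge) ∉ γ.support := hn
    rw [hline v n]
    exact Finsupp.notMem_support_iff.mp hnot
  ext ed
  rw [Finsupp.coe_zero, Pi.zero_apply]
  by_cases hed : ed ∈ γ.support
  · have h2 := hdir ed hed
    obtain ⟨w, i⟩ := ed
    simp only at h2
    subst h2
    exact hzero w
  · exact Finsupp.notMem_support_iff.mp hed

end CubicalLattice

open CubicalLattice in
/-- **Isoperimetric inequality on the 1-skeleton of the cubical lattice.**
Every cellular 1-cycle `α` on the unit cubical lattice in `ℝ³` bounds a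
cellular 2-chain `C` with `∂C = α` and `‖C‖_∞ ≤ ‖α‖₁` (each square appears in
`C` with coefficient of absolute value at most `‖α‖₁`). -/
theorem cubical_isoperimetric (α : Edge →₀ ℤ) (hcycle : bdry1 α = 0) :
    ∃ C : Square →₀ ℤ, bdry2 C = α ∧ ∀ sq, |C sq| ≤ l1 α := by
  classical
  have hα1 : B1 α = 0 := by rw [← bdry1_eq]; exact hcycle
  set β := PR 2 α with hβdef
  have h2 : B2 (FL 2 α) = α - β := by rw [main_id 2 α, hα1, map_zero, sub_zero]
  have hβ1 : B1 β = 0 := by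
    have h := congrArg (fun y => B1 y) h2
    simp only [map_sub, B1_B2, hα1, zero_sub] at h
    exact neg_eq_zero.mp h.symm
  have h1 : B2 (FL 1 β) = β - PR 1 β := by rw [main_id 1 β, hβ1, map_zero, sub_zero]
  set γ := PR 1 β with hγdef
  have hγ1 : B1 γ = 0 := by
    have h := congrArg (fun y => B1 y) h1
    simp only [map_sub, B1_B2, hβ1, zero_sub] at h
    exact neg_eq_zero.mp h.symm
  have hβdir : ∀ ed : Edge, ed.2 = 2 → β ed = 0 := fun ed h => PR_dir_d 2 α ed h
  have hγdir : ∀ ed ∈ γ.support, ed.2 = (0 : Fin 3) := by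
    intro ed hed
    by_contra hne
    have h3 : ed.2 = 1 ∨ ed.2 = 2 := by
      rcases ed with ⟨w, i⟩
      fin_cases i
      · exact absurd rfl hne
      · left; rfl
      · right; rfl
    have hz : γ ed = 0 := by
      rcases h3 with h3 | h3
      · exact PR_dir_d 1 β ed h3
      · refine PR_dir_ne 1 β ed fun a ha haa => ?_
        exact Finsupp.mem_support_iff.mp ha (hβdir a (by rw [haa, h3]))
    exact Finsupp.mem_support_iff.mp hed hz
  have hγ0 : γ = 0 := cycle_dir0_eq_zero γ hγdir hγ1
  refine ⟨FL 2 α + FL 1 β, ?_, ?_⟩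
  · rw [bdry2_eq, map_add, h2, h1, hγ0]
    abel
  · intro sq
    rw [Finsupp.add_apply]
    by_cases hsq : sq.1.2.2 = 2
    · have hz : FL 1 β sq = 0 := by
        rw [FL]
        refine lc_apply_zero _ _ _ fun a ha => ?_
        refine fill_one_apply a (fun h2a => ?_) sq hsq
        exact Finsupp.mem_support_iff.mp ha (hβdir a h2a)
      rw [hz, add_zero]
      rw [FL]
      exact abs_lc_apply_le _ _ _ fun a _ => fill_abs_le 2 a sq
    · have hz : FL 2 α sq = 0 := by
        rw [FL]
        exact lc_apply_zero _ _ _ fun a _ => fill_two_apply a sq hsq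
      rw [hz, zero_add]
      calc |FL 1 β sq| ≤ l1 β := by
            rw [FL]; exact abs_lc_apply_le _ _ _ fun a _ => fill_abs_le 1 a sq
        _ ≤ l1 α := l1_PR_le 2 α
end

section
/- In the cubical lattice graph of ℤ³ (vertices ℤ³, edges between points at distance 1), every closed edge-path ω of combinatorial length n whose associated 1-chain ch(ω) has no cancellation can be filled: there is a cellular 2-chain C supported on unit lattice squares with ∂C = ch(ω) and every square used with coefficient of absolute value at most n. -/
/-!
STATEMENT 7: In the cubical lattice graph of `ℤ³` (vertices `ℤ³`, edges between
points at distance 1), every closed edge-path `ω` of combinatorial length `n`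
whose associated 1-chain `ch(ω)` has no cancellation can be filled: there is a
cellular 2-chain `C` supported on unit lattice squares with `∂C = ch(ω)` and
every square used with coefficient of absolute value at most `n`.

Combinatorial model: edges are pairs `(v, i)` (the segment from `v` to
`v + eᵢ`); a closed edge path is a list of directed edge traversals (a word in
`x, y, z, x⁻¹, y⁻¹, z⁻¹`) with matching endpoints; `ch(ω)` records the signed
traversal count of each edge; "no cancellation" means `‖ch(ω)‖₁ = n`, i.e. the
signed counts do not cancel; squares `(v, i, j)` with `i < j` are the unit
lattice squares, with the standard cubical boundary. -/

namespace CubicalLattice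

/-- A step of an edge path: an edge with a direction of traversal. -/
abbrev Step := Edge × Bool

noncomputable def stepSrc (s : Step) : Vert := if s.2 then s.1.1 else s.1.1 + e s.1.2

noncomputable def stepTgt (s : Step) : Vert := if s.2 then s.1.1 + e s.1.2 else s.1.1

/-- `p` is an edge path in the lattice graph from `a` to `b`. -/
def IsArc : List Step → Vert → Vert → Prop
  | [], a, b => a = b
  | s :: rest, a, b => stepSrc s = a ∧ IsArc rest (stepTgt s) b

/-- The 1-chain `ch(ω)` associated to an edge path: the signed traversal count
of each edge. -/
noncomputable def ch (p : List Step) : Edge →₀ ℤ :=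
  (p.map fun s => Finsupp.single s.1 (if s.2 then (1 : ℤ) else -1)).sum

end CubicalLattice

namespace CubicalFill
open CubicalLattice


variable {M : Type*} [AddCommGroup M]

/-- Signed interval sum: `∑_{t=α}^{β-1} f t`, with sign reversed if `β < α`. -/
noncomputable def L (f : ℤ → M) (α β : ℤ) : M :=
  (∑ t ∈ Finset.Ico α β, f t) - ∑ t ∈ Finset.Ico β α, f t

lemma L_of_le (f : ℤ → M) {α β : ℤ} (h : α ≤ β) :
    L f α β = ∑ t ∈ Finset.Ico α β, f t := by
  rw [L, Finset.Ico_eq_empty (by omega : ¬ β < α), Finset.sum_empty, sub_zero]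

lemma L_of_ge (f : ℤ → M) {α β : ℤ} (h : β ≤ α) :
    L f α β = -∑ t ∈ Finset.Ico β α, f t := by
  rw [L, Finset.Ico_eq_empty (by omega : ¬ α < β), Finset.sum_empty, zero_sub]

lemma L_swap (f : ℤ → M) (α β : ℤ) : L f β α = -L f α β := by
  rw [L, L, neg_sub]

lemma L_succ (f : ℤ → M) (α : ℤ) : L f α (α + 1) = f α := by
  rw [L_of_le f (by omega)]
  have h : Finset.Ico α (α + 1) = {α} := by
    ext t; simp only [Finset.mem_Ico, Finset.mem_singleton]; omega
  rw [h, Finset.sum_singleton]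

lemma sum_Ico_consec (f : ℤ → M) {α β γ : ℤ} (h1 : α ≤ β) (h2 : β ≤ γ) :
    (∑ t ∈ Finset.Ico α β, f t) + ∑ t ∈ Finset.Ico β γ, f t
      = ∑ t ∈ Finset.Ico α γ, f t := by
  rw [← Finset.sum_union (Finset.Ico_disjoint_Ico_consecutive α β γ),
    Finset.Ico_union_Ico_eq_Ico h1 h2]

lemma L_trans (f : ℤ → M) (α β γ : ℤ) : L f α β + L f β γ = L f α γ := by
  have base : ∀ {x y z : ℤ}, x ≤ y → y ≤ z → L f x y + L f y z = L f x z := by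
    intro x y z h1 h2
    rw [L_of_le f h1, L_of_le f h2, L_of_le f (h1.trans h2), sum_Ico_consec f h1 h2]
  rcases le_total α β with h1 | h1 <;> rcases le_total β γ with h2 | h2
  · exact base h1 h2
  · rcases le_total α γ with h3 | h3
    · have b := base h3 h2
      rw [L_swap f γ β, ← b]; abel
    · have b := base h3 h1
      rw [L_swap f γ β, L_swap f γ α, ← b]; abel
  · rcases le_total α γ with h3 | h3
    · have b := base h1 h3
      rw [L_swap f β α, ← b]; abel
    · have b := base h2 h3
      rw [L_swap f β α, L_swap f γ α, ← b]; abel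
  · have b := base h2 h1
    rw [L_swap f β α, L_swap f γ β, L_swap f γ α, ← b]; abel

lemma sum_Ico_telescope (g : ℤ → M) {α β : ℤ} (h : α ≤ β) :
    ∑ t ∈ Finset.Ico α β, (g (t + 1) - g t) = g β - g α := by
  obtain ⟨k, rfl⟩ : ∃ k : ℕ, β = α + k := ⟨(β - α).toNat, by omega⟩
  clear h
  induction k with
  | zero => simp
  | succ k ih =>
    have h1 : Finset.Ico α (α + (k + 1 : ℕ)) = insert (α + k) (Finset.Ico α (α + k)) := by
      ext t; simp only [Finset.mem_Ico, Finset.mem_insert]; omega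
    rw [h1, Finset.sum_insert (by simp [Finset.mem_Ico]), ih]
    have : (α + k : ℤ) + 1 = α + (k + 1 : ℕ) := by push_cast; ring
    rw [this]; abel

lemma L_telescope (g : ℤ → M) (α β : ℤ) :
    L (fun t => g (t + 1) - g t) α β = g β - g α := by
  rcases le_total α β with h | h
  · rw [L_of_le _ h, sum_Ico_telescope g h]
  · rw [L_of_ge _ h, sum_Ico_telescope g h, neg_sub]

lemma L_telescope' (g : ℤ → M) (α β : ℤ) :
    L (fun t => g t - g (t + 1)) α β = g α - g β := by
  have h : (fun t => g t - g (t + 1)) = fun t => (-g) (t + 1) - (-g) t := by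
    funext t; simp; abel
  rw [h, L_telescope (-g) α β]; simp; abel

lemma L_add (f g : ℤ → M) (α β : ℤ) :
    L (fun t => f t + g t) α β = L f α β + L g α β := by
  simp only [L, Finset.sum_add_distrib]; abel

lemma L_sub (f g : ℤ → M) (α β : ℤ) :
    L (fun t => f t - g t) α β = L f α β - L g α β := by
  simp only [L, Finset.sum_sub_distrib]; abel

lemma L_map {N : Type*} [AddCommGroup N] (φ : M →+ N) (f : ℤ → M) (α β : ℤ) :
    φ (L f α β) = L (fun t => φ (f t)) α β := by
  simp only [L, map_sub, map_sum]

end CubicalFill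


namespace CubicalFill
open CubicalLattice

/-- Evaluation of `L` of finsupps at a point. -/
lemma L_apply {τ : Type*} (f : ℤ → (τ →₀ ℤ)) (α β : ℤ) (x : τ) :
    (L f α β) x = L (fun t => f t x) α β := by
  simpa using L_map (Finsupp.applyAddHom x) f α β

lemma L_single_abs_le {τ : Type*} [DecidableEq τ] (g : ℤ → τ)
    (hg : Function.Injective g) (α β : ℤ) (x : τ) :
    |(L (fun t => Finsupp.single (g t) (1 : ℤ)) α β) x| ≤ 1 := by
  rw [L_apply]
  have key : ∀ γ δ : ℤ, γ ≤ δ →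
      |∑ t ∈ Finset.Ico γ δ, (Finsupp.single (g t) (1 : ℤ)) x| ≤ 1 := by
    intro γ δ _
    have h1 : ∀ t ∈ Finset.Ico γ δ, (Finsupp.single (g t) (1 : ℤ)) x
        = if g t = x then 1 else 0 := by
      intro t _; rw [Finsupp.single_apply]
    rw [Finset.sum_congr rfl h1, Finset.sum_boole]
    have h2 : ((Finset.Ico γ δ).filter (fun t => g t = x)).card ≤ 1 := by
      apply Finset.card_le_one.2
      intro s hs t ht
      simp only [Finset.mem_filter] at hs ht
      exact hg (hs.2.trans ht.2.symm)
    rw [abs_of_nonneg (by positivity)]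
    exact_mod_cast h2
  rcases le_total α β with h | h
  · rw [L_of_le _ h]; exact key _ _ h
  · rw [L_of_ge _ h, abs_neg]; exact key _ _ h

lemma L_single_apply_eq_zero {τ : Type*} [DecidableEq τ] (g : ℤ → τ)
    (α β : ℤ) (x : τ) (h : ∀ t, g t ≠ x) :
    (L (fun t => Finsupp.single (g t) (1 : ℤ)) α β) x = 0 := by
  rw [L_apply]
  have h1 : (fun t => (Finsupp.single (g t) (1 : ℤ)) x) = fun _ => (0 : ℤ) := by
    funext t; rw [Finsupp.single_apply, if_neg (h t)]
  rw [h1]; simp [L]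

/-! ### The boundary operator as an additive map -/

noncomputable def B : (Square →₀ ℤ) →+ (Edge →₀ ℤ) :=
  (Finsupp.linearCombination ℤ bdrySquare).toAddMonoidHom

lemma bdry2_eq (C : Square →₀ ℤ) : bdry2 C = B C :=
  (Finsupp.linearCombination_apply ℤ C).symm

lemma B_single (sq : Square) : B (Finsupp.single sq (1 : ℤ)) = bdrySquare sq := by
  simp [B, Finsupp.linearCombination_single]

lemma bdry2_add (C D : Square →₀ ℤ) : bdry2 (C + D) = bdry2 C + bdry2 D := by
  rw [bdry2_eq, bdry2_eq, bdry2_eq, map_add]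

lemma bdry2_neg (C : Square →₀ ℤ) : bdry2 (-C) = -bdry2 C := by
  rw [bdry2_eq, bdry2_eq, map_neg]

lemma bdry2_zero : bdry2 (0 : Square →₀ ℤ) = 0 := by
  rw [bdry2_eq, map_zero]

/-! ### Vertices, edges and squares -/

def vx (a b c : ℤ) : Vert := ![a, b, c]

lemma vert_eta (v : Vert) : vx (v 0) (v 1) (v 2) = v := by
  funext i; fin_cases i <;> rfl

lemma vx_add_e0 (a b c : ℤ) : vx a b c + e 0 = vx (a + 1) b c := by
  funext i
  fin_cases i <;>
    simp [vx, e, Pi.single_apply]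
lemma vx_add_e1 (a b c : ℤ) : vx a b c + e 1 = vx a (b + 1) c := by
  funext i
  fin_cases i <;>
    simp [vx, e, Pi.single_apply]
lemma vx_add_e2 (a b c : ℤ) : vx a b c + e 2 = vx a b (c + 1) := by
  funext i
  fin_cases i <;>
    simp [vx, e, Pi.single_apply]

noncomputable def Ex (v : Vert) (i : Fin 3) : Edge →₀ ℤ := Finsupp.single (v, i) 1

def sq01 (a b : ℤ) : Square := ⟨(vx a b 0, 0, 1), show (0:Fin 3) < 1 by decide⟩
def sq02 (a b c : ℤ) : Square := ⟨(vx a b c, 0, 2), show (0:Fin 3) < 2 by decide⟩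
def sq12 (a b c : ℤ) : Square := ⟨(vx a b c, 1, 2), show (1:Fin 3) < 2 by decide⟩


/-! ### Staircase chains and ladder fillings -/

/-- The staircase 1-chain from the origin to `v`. -/
noncomputable def sigma (v : Vert) : Edge →₀ ℤ :=
  L (fun t => Ex (vx t 0 0) 0) 0 (v 0)
    + L (fun t => Ex (vx (v 0) t 0) 1) 0 (v 1)
    + L (fun t => Ex (vx (v 0) (v 1) t) 2) 0 (v 2)

noncomputable def G (v : Vert) (i : Fin 3) : Square →₀ ℤ :=
  if i = 0 then
    -L (fun t => Finsupp.single (sq01 (v 0) t) (1 : ℤ)) 0 (v 1)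
      - L (fun t => Finsupp.single (sq02 (v 0) (v 1) t) (1 : ℤ)) 0 (v 2)
  else if i = 1 then
    -L (fun t => Finsupp.single (sq12 (v 0) (v 1) t) (1 : ℤ)) 0 (v 2)
  else 0

lemma bdry2_sub (C D : Square →₀ ℤ) : bdry2 (C - D) = bdry2 C - bdry2 D := by
  rw [bdry2_eq, bdry2_eq, bdry2_eq, map_sub]

lemma bdry_ladder01 (a b : ℤ) :
    bdry2 (L (fun t => Finsupp.single (sq01 a t) (1 : ℤ)) 0 b)
      = (Ex (vx a 0 0) 0 - Ex (vx a b 0) 0)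
        + (L (fun t => Ex (vx (a + 1) t 0) 1) 0 b
            - L (fun t => Ex (vx a t 0) 1) 0 b) := by
  rw [bdry2_eq, L_map]
  have key : ∀ t : ℤ, B (Finsupp.single (sq01 a t) (1 : ℤ))
      = (Ex (vx a t 0) 0 - Ex (vx a (t + 1) 0) 0)
        + (Ex (vx (a + 1) t 0) 1 - Ex (vx a t 0) 1) := by
    intro t
    rw [B_single]
    have h : bdrySquare (sq01 a t) = Ex (vx a t 0) 0 + Ex (vx a t 0 + e 0) 1
        - Ex (vx a t 0 + e 1) 0 - Ex (vx a t 0) 1 := rfl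
    rw [h, vx_add_e0, vx_add_e1]
    abel
  simp only [key]
  have h1 : L (fun t => (Ex (vx a t 0) 0 - Ex (vx a (t + 1) 0) 0)
        + (Ex (vx (a + 1) t 0) 1 - Ex (vx a t 0) 1)) 0 b
      = L (fun t => Ex (vx a t 0) 0 - Ex (vx a (t + 1) 0) 0) 0 b
        + L (fun t => Ex (vx (a + 1) t 0) 1 - Ex (vx a t 0) 1) 0 b := L_add _ _ _ _
  have h2 : L (fun t => Ex (vx a t 0) 0 - Ex (vx a (t + 1) 0) 0) 0 b
      = Ex (vx a 0 0) 0 - Ex (vx a b 0) 0 := L_telescope' (fun s => Ex (vx a s 0) 0) 0 b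
  have h3 : L (fun t => Ex (vx (a + 1) t 0) 1 - Ex (vx a t 0) 1) 0 b
      = L (fun t => Ex (vx (a + 1) t 0) 1) 0 b - L (fun t => Ex (vx a t 0) 1) 0 b :=
    L_sub _ _ _ _
  rw [h1, h2, h3]

lemma bdry_ladder02 (a b c : ℤ) :
    bdry2 (L (fun t => Finsupp.single (sq02 a b t) (1 : ℤ)) 0 c)
      = (Ex (vx a b 0) 0 - Ex (vx a b c) 0)
        + (L (fun t => Ex (vx (a + 1) b t) 2) 0 c
            - L (fun t => Ex (vx a b t) 2) 0 c) := by
  rw [bdry2_eq, L_map]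
  have key : ∀ t : ℤ, B (Finsupp.single (sq02 a b t) (1 : ℤ))
      = (Ex (vx a b t) 0 - Ex (vx a b (t + 1)) 0)
        + (Ex (vx (a + 1) b t) 2 - Ex (vx a b t) 2) := by
    intro t
    rw [B_single]
    have h : bdrySquare (sq02 a b t) = Ex (vx a b t) 0 + Ex (vx a b t + e 0) 2
        - Ex (vx a b t + e 2) 0 - Ex (vx a b t) 2 := rfl
    rw [h, vx_add_e0, vx_add_e2]
    abel
  simp only [key]
  have h1 : L (fun t => (Ex (vx a b t) 0 - Ex (vx a b (t + 1)) 0)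
        + (Ex (vx (a + 1) b t) 2 - Ex (vx a b t) 2)) 0 c
      = L (fun t => Ex (vx a b t) 0 - Ex (vx a b (t + 1)) 0) 0 c
        + L (fun t => Ex (vx (a + 1) b t) 2 - Ex (vx a b t) 2) 0 c := L_add _ _ _ _
  have h2 : L (fun t => Ex (vx a b t) 0 - Ex (vx a b (t + 1)) 0) 0 c
      = Ex (vx a b 0) 0 - Ex (vx a b c) 0 := L_telescope' (fun s => Ex (vx a b s) 0) 0 c
  have h3 : L (fun t => Ex (vx (a + 1) b t) 2 - Ex (vx a b t) 2) 0 c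
      = L (fun t => Ex (vx (a + 1) b t) 2) 0 c - L (fun t => Ex (vx a b t) 2) 0 c :=
    L_sub _ _ _ _
  rw [h1, h2, h3]

lemma bdry_ladder12 (a b c : ℤ) :
    bdry2 (L (fun t => Finsupp.single (sq12 a b t) (1 : ℤ)) 0 c)
      = (Ex (vx a b 0) 1 - Ex (vx a b c) 1)
        + (L (fun t => Ex (vx a (b + 1) t) 2) 0 c
            - L (fun t => Ex (vx a b t) 2) 0 c) := by
  rw [bdry2_eq, L_map]
  have key : ∀ t : ℤ, B (Finsupp.single (sq12 a b t) (1 : ℤ))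
      = (Ex (vx a b t) 1 - Ex (vx a b (t + 1)) 1)
        + (Ex (vx a (b + 1) t) 2 - Ex (vx a b t) 2) := by
    intro t
    rw [B_single]
    have h : bdrySquare (sq12 a b t) = Ex (vx a b t) 1 + Ex (vx a b t + e 1) 2
        - Ex (vx a b t + e 2) 1 - Ex (vx a b t) 2 := rfl
    rw [h, vx_add_e1, vx_add_e2]
    abel
  simp only [key]
  have h1 : L (fun t => (Ex (vx a b t) 1 - Ex (vx a b (t + 1)) 1)
        + (Ex (vx a (b + 1) t) 2 - Ex (vx a b t) 2)) 0 c
      = L (fun t => Ex (vx a b t) 1 - Ex (vx a b (t + 1)) 1) 0 c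
        + L (fun t => Ex (vx a (b + 1) t) 2 - Ex (vx a b t) 2) 0 c := L_add _ _ _ _
  have h2 : L (fun t => Ex (vx a b t) 1 - Ex (vx a b (t + 1)) 1) 0 c
      = Ex (vx a b 0) 1 - Ex (vx a b c) 1 := L_telescope' (fun s => Ex (vx a b s) 1) 0 c
  have h3 : L (fun t => Ex (vx a (b + 1) t) 2 - Ex (vx a b t) 2) 0 c
      = L (fun t => Ex (vx a (b + 1) t) 2) 0 c - L (fun t => Ex (vx a b t) 2) 0 c :=
    L_sub _ _ _ _
  rw [h1, h2, h3]

lemma add_e_apply (v : Vert) (i j : Fin 3) :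
    (v + e i) j = v j + if j = i then 1 else 0 := by
  simp [e, Pi.single_apply]

lemma G_bdry (v : Vert) (i : Fin 3) :
    bdry2 (G v i) = Ex v i + sigma v - sigma (v + e i) := by
  fin_cases i
  · -- i = 0
    show bdry2 (G v 0) = Ex v 0 + sigma v - sigma (v + e 0)
    have k0 : (v + e 0) 0 = v 0 + 1 := by rw [add_e_apply, if_pos rfl]
    have k1 : (v + e 0) 1 = v 1 := by rw [add_e_apply, if_neg (by decide), add_zero]
    have k2 : (v + e 0) 2 = v 2 := by rw [add_e_apply, if_neg (by decide), add_zero]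
    have hG : G v 0 = -L (fun t => Finsupp.single (sq01 (v 0) t) (1 : ℤ)) 0 (v 1)
        - L (fun t => Finsupp.single (sq02 (v 0) (v 1) t) (1 : ℤ)) 0 (v 2) := by
      simp [G]
    rw [hG, bdry2_sub, bdry2_neg, bdry_ladder01, bdry_ladder02]
    simp only [sigma, k0, k1, k2]
    have hsplit : L (fun t => Ex (vx t 0 0) 0) 0 (v 0 + 1)
        = L (fun t => Ex (vx t 0 0) 0) 0 (v 0) + Ex (vx (v 0) 0 0) 0 := by
      rw [← L_trans _ 0 (v 0) (v 0 + 1), L_succ]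
    rw [hsplit, vert_eta]
    abel
  · -- i = 1
    show bdry2 (G v 1) = Ex v 1 + sigma v - sigma (v + e 1)
    have k0 : (v + e 1) 0 = v 0 := by rw [add_e_apply, if_neg (by decide), add_zero]
    have k1 : (v + e 1) 1 = v 1 + 1 := by rw [add_e_apply, if_pos rfl]
    have k2 : (v + e 1) 2 = v 2 := by rw [add_e_apply, if_neg (by decide), add_zero]
    have hG : G v 1 = -L (fun t => Finsupp.single (sq12 (v 0) (v 1) t) (1 : ℤ)) 0 (v 2) := by
      simp [G]
    rw [hG, bdry2_neg, bdry_ladder12]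
    simp only [sigma, k0, k1, k2]
    have hsplit : L (fun t => Ex (vx (v 0) t 0) 1) 0 (v 1 + 1)
        = L (fun t => Ex (vx (v 0) t 0) 1) 0 (v 1) + Ex (vx (v 0) (v 1) 0) 1 := by
      rw [← L_trans _ 0 (v 1) (v 1 + 1), L_succ]
    rw [hsplit, vert_eta]
    abel
  · -- i = 2
    show bdry2 (G v 2) = Ex v 2 + sigma v - sigma (v + e 2)
    have k0 : (v + e 2) 0 = v 0 := by rw [add_e_apply, if_neg (by decide), add_zero]
    have k1 : (v + e 2) 1 = v 1 := by rw [add_e_apply, if_neg (by decide), add_zero]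
    have k2 : (v + e 2) 2 = v 2 + 1 := by rw [add_e_apply, if_pos rfl]
    have hG : G v 2 = 0 := by simp [G]
    rw [hG, bdry2_zero]
    simp only [sigma, k0, k1, k2]
    have hsplit : L (fun t => Ex (vx (v 0) (v 1) t) 2) 0 (v 2 + 1)
        = L (fun t => Ex (vx (v 0) (v 1) t) 2) 0 (v 2) + Ex (vx (v 0) (v 1) (v 2)) 2 := by
      rw [← L_trans _ 0 (v 2) (v 2 + 1), L_succ]
    rw [hsplit, vert_eta]
    abel

lemma G_abs_le (v : Vert) (i : Fin 3) (sq : Square) : |(G v i) sq| ≤ 1 := by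
  fin_cases i
  · show |(G v 0) sq| ≤ 1
    have hG : G v 0 = -L (fun t => Finsupp.single (sq01 (v 0) t) (1 : ℤ)) 0 (v 1)
        - L (fun t => Finsupp.single (sq02 (v 0) (v 1) t) (1 : ℤ)) 0 (v 2) := by
      simp [G]
    rw [hG, Finsupp.sub_apply, Finsupp.neg_apply]
    by_cases hc : sq.1.2.2 = 1
    · have hz : (L (fun t => Finsupp.single (sq02 (v 0) (v 1) t) (1 : ℤ)) 0 (v 2)) sq = 0 := by
        apply L_single_apply_eq_zero
        intro t ht
        rw [← ht] at hc
        exact (by decide : ¬(2 : Fin 3) = 1) hc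
      rw [hz, sub_zero, abs_neg]
      apply L_single_abs_le
      intro t t' h
      have h2 := congrArg (fun q : Square => q.1.1 1) h
      simpa [sq01, vx] using h2
    · have hz : (L (fun t => Finsupp.single (sq01 (v 0) t) (1 : ℤ)) 0 (v 1)) sq = 0 := by
        apply L_single_apply_eq_zero
        intro t ht
        exact hc (by rw [← ht]; rfl)
      rw [hz, neg_zero, zero_sub, abs_neg]
      apply L_single_abs_le
      intro t t' h
      have h2 := congrArg (fun q : Square => q.1.1 2) h
      simpa [sq02, vx] using h2
  · show |(G v 1) sq| ≤ 1
    have hG : G v 1 = -L (fun t => Finsupp.single (sq12 (v 0) (v 1) t) (1 : ℤ)) 0 (v 2) := by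
      simp [G]
    rw [hG, Finsupp.neg_apply, abs_neg]
    apply L_single_abs_le
    intro t t' h
    have h2 := congrArg (fun q : Square => q.1.1 2) h
    simpa [sq12, vx] using h2
  · show |(G v 2) sq| ≤ 1
    have hG : G v 2 = 0 := by simp [G]
    rw [hG]
    simp

/-! ### Filling a path -/

noncomputable def stepFill (s : Step) : Square →₀ ℤ :=
  if s.2 then G s.1.1 s.1.2 else -G s.1.1 s.1.2

lemma ch_cons (s : Step) (p : List Step) :
    ch (s :: p) = Finsupp.single s.1 (if s.2 then (1 : ℤ) else -1) + ch p := by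
  simp [ch]

lemma stepFill_bdry (s : Step) :
    bdry2 (stepFill s)
      = Finsupp.single s.1 (if s.2 then (1 : ℤ) else -1)
        + sigma (stepSrc s) - sigma (stepTgt s) := by
  obtain ⟨⟨v, i⟩, d⟩ := s
  cases d
  · simp only [stepFill, stepSrc, stepTgt, Bool.false_eq_true, if_false]
    rw [bdry2_neg, G_bdry]
    have h : Finsupp.single (v, i) (-1 : ℤ) = -Ex v i := by
      simp [Ex, ← Finsupp.single_neg]
    rw [h]
    abel
  · simp only [stepFill, stepSrc, stepTgt, if_true]
    rw [G_bdry]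
    rfl

lemma stepFill_abs_le (s : Step) (sq : Square) : |stepFill s sq| ≤ 1 := by
  obtain ⟨⟨v, i⟩, d⟩ := s
  cases d
  · simpa [stepFill] using G_abs_le v i sq
  · simpa [stepFill] using G_abs_le v i sq

noncomputable def fill : List Step → (Square →₀ ℤ)
  | [] => 0
  | s :: p => stepFill s + fill p

lemma fill_bdry : ∀ (p : List Step) (x y : Vert), IsArc p x y →
    bdry2 (fill p) = ch p + sigma x - sigma y := by
  intro p
  induction p with
  | nil =>
    intro x y h
    have hxy : x = y := h
    subst hxy
    simp [fill, ch, bdry2_zero]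
  | cons s p ih =>
    intro x y h
    obtain ⟨hs, ht⟩ := h
    rw [show fill (s :: p) = stepFill s + fill p from rfl, bdry2_add, stepFill_bdry,
      ih _ _ ht, ch_cons, hs]
    abel

lemma fill_abs_le : ∀ (p : List Step) (sq : Square), |fill p sq| ≤ (p.length : ℤ) := by
  intro p
  induction p with
  | nil => intro sq; simp [fill]
  | cons s p ih =>
    intro sq
    rw [show fill (s :: p) = stepFill s + fill p from rfl, Finsupp.add_apply]
    calc |stepFill s sq + fill p sq| ≤ |stepFill s sq| + |fill p sq| := abs_add_le _ _
      _ ≤ 1 + (p.length : ℤ) := add_le_add (stepFill_abs_le s sq) (ih sq)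
      _ = ((s :: p).length : ℤ) := by simp [List.length_cons]; push_cast; ring

end CubicalFill

open CubicalLattice in
/-- **Filling closed lattice paths without cancellation.**  Let `ω` be a closed
edge-path of combinatorial length `n` in the cubical lattice graph of `ℤ³`
whose associated chain `ch(ω)` has no cancellation (`‖ch(ω)‖₁ = n`).  Then
there is a cellular 2-chain `C` on the unit lattice squares with `∂C = ch(ω)`
and every square used with coefficient of absolute value at most `n`. -/
theorem fill_closed_lattice_path (ω : List Step) (a : Vert) (n : ℕ)
    (hlen : ω.length = n) (hclosed : IsArc ω a a)
    (hnocancel : l1 (ch ω) = n) :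
    ∃ C : Square →₀ ℤ, bdry2 C = ch ω ∧ ∀ sq, |C sq| ≤ n := by
  refine ⟨CubicalFill.fill ω, ?_, ?_⟩
  · rw [CubicalFill.fill_bdry ω a a hclosed]
    abel
  · intro sq
    have h := CubicalFill.fill_abs_le ω sq
    rw [hlen] at h
    exact h
end
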